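/- If a₁ > a₂ > 0 and the configuration η ⊆ ℤ^d is a union of hypercubes, then the iterates of the best-response map form a nondecreasing sequence of configurations: Φⁿ(η) ⊆ Φ^{n+1}(η) for every integer n ≥ 0. -/

import Mathlib

/-- Two sites of `ℤᵈ` are neighbors iff their `ℓ¹`-distance equals `1`. -/
def Neighbor (d : ℕ) (x y : Fin d → ℤ) : Prop :=
  (∑ i, (x i - y i).natAbs) = 1

/-- Number of neighbors of `x` following strategy 1 (i.e. belonging to `η`). -/
noncomputable def N1 (d : ℕ) (η : Set (Fin d → ℤ)) (x : Fin d → ℤ) : ℕ :=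
  Set.ncard {y | Neighbor d x y ∧ y ∈ η}

/-- Number of neighbors of `x` following strategy 2 (i.e. not belonging to `η`). -/
noncomputable def N2 (d : ℕ) (η : Set (Fin d → ℤ)) (x : Fin d → ℤ) : ℕ :=
  Set.ncard {y | Neighbor d x y ∧ y ∉ η}

/-- The best-response map on configurations. -/
def Phi (d : ℕ) (a₁ a₂ : ℝ) (η : Set (Fin d → ℤ)) : Set (Fin d → ℤ) :=
  {x | a₁ * (N1 d η x : ℝ) > a₂ * (N2 d η x : ℝ) ∨
    (x ∈ η ∧ a₁ * (N1 d η x : ℝ) = a₂ * (N2 d η x : ℝ))}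

/-- The hypercube `H_z = 2z + {0,1}^d`. -/
def Hcube (d : ℕ) (z : Fin d → ℤ) : Set (Fin d → ℤ) :=
  {x | ∀ i, x i = 2 * z i ∨ x i = 2 * z i + 1}

/-- A configuration is a union of hypercubes if it is `⋃_{z ∈ S} H_z` for some `S ⊆ ℤᵈ`. -/
def IsUnionOfHypercubes (d : ℕ) (η : Set (Fin d → ℤ)) : Prop :=
  ∃ S : Set (Fin d → ℤ), η = ⋃ z ∈ S, Hcube d z


/-!
A site of a hypercube `H_z ⊆ η` has its `d` neighbours inside `H_z` in `η`, so at most `d` of its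
`2d` neighbours lie outside `η`; since `a₁ ≥ a₂ ≥ 0`, staying is then a best response, i.e.
`η ⊆ Φ(η)`. For nonnegative `a₁, a₂` the map `Φ` is monotone (enlarging `η` raises `N₁` and
lowers `N₂`), so applying `Φⁿ` to `η ⊆ Φ(η)` gives `Φⁿ(η) ⊆ Φⁿ⁺¹(η)`.
-/

open Function Set

section Neighbor

variable {d : ℕ} {x y : Fin d → ℤ}

lemma neighbor_update (i : Fin d) {c : ℤ} (hc : (x i - c).natAbs = 1) :
    Neighbor d x (update x i c) := by
  rw [Neighbor, Finset.sum_eq_single i (fun j _ hj => by simp [update_of_ne hj]) (by simp)]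
  simpa using hc

lemma Neighbor.exists_eq_update (h : Neighbor d x y) :
    ∃ i c, (x i - c).natAbs = 1 ∧ y = update x i c := by
  rw [Neighbor] at h
  obtain ⟨i, -, hi⟩ := Finset.exists_ne_zero_of_sum_ne_zero (h.symm ▸ one_ne_zero :
    ∑ j, (x j - y j).natAbs ≠ 0)
  have hpair (j : Fin d) (hj : j ≠ i) : (x i - y i).natAbs + (x j - y j).natAbs ≤ 1 :=
    calc _ = ∑ k ∈ {i, j}, (x k - y k).natAbs := (Finset.sum_pair hj.symm).symm
      _ ≤ ∑ k, (x k - y k).natAbs := Finset.sum_le_sum_of_subset (Finset.subset_univ _)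
      _ = 1 := h
  refine ⟨i, y i, ?_, eq_update_iff.2 ⟨rfl, fun j hj => ?_⟩⟩
  · have := (Finset.single_le_sum (fun j _ => Nat.zero_le _) (Finset.mem_univ i)).trans_eq h
    omega
  · have := hpair j hj
    omega

lemma setOf_neighbor_finite (x : Fin d → ℤ) : {y | Neighbor d x y}.Finite := by
  refine (Finite.pi fun i => finite_Icc (x i - 1) (x i + 1)).subset fun y hy i _ => ?_
  have := (Finset.single_le_sum (fun j _ => Nat.zero_le _) (Finset.mem_univ i)).trans_eq hy
  constructor <;> omega

end Neighbor

lemma ncard_range_update {ι α : Type*} [DecidableEq ι] {x c : ι → α} (hc : ∀ i, c i ≠ x i) :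
    (range fun i => update x i (c i)).ncard = Nat.card ι := by
  refine ncard_range_of_injective fun i j hij => ?_
  by_contra hne
  exact hc i (by simpa [update_of_ne hne] using congrFun hij i)

section Payoff

variable {d : ℕ} {η η' : Set (Fin d → ℤ)} {x : Fin d → ℤ} {a₁ a₂ : ℝ}

lemma N1_mono (h : η ⊆ η') : N1 d η x ≤ N1 d η' x :=
  ncard_le_ncard (fun _ hy => ⟨hy.1, h hy.2⟩) ((setOf_neighbor_finite x).subset fun _ hy => hy.1)

lemma N2_anti (h : η ⊆ η') : N2 d η' x ≤ N2 d η x :=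
  ncard_le_ncard (fun _ hy => ⟨hy.1, fun hη => hy.2 (h hη)⟩)
    ((setOf_neighbor_finite x).subset fun _ hy => hy.1)

lemma mem_Phi_of_le (hx : x ∈ η) (hle : a₂ * N2 d η x ≤ a₁ * N1 d η x) :
    x ∈ Phi d a₁ a₂ η :=
  hle.lt_or_eq.imp id fun heq => ⟨hx, heq.symm⟩

lemma Phi_monotone (ha₁ : 0 ≤ a₁) (ha₂ : 0 ≤ a₂) : Monotone (Phi d a₁ a₂) := by
  intro η η' h x hx
  have hN1 : a₁ * N1 d η x ≤ a₁ * N1 d η' x := by gcongr; exact N1_mono h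
  have hN2 : a₂ * N2 d η' x ≤ a₂ * N2 d η x := by gcongr; exact N2_anti h
  rcases hx with hlt | ⟨hxη, heq⟩
  · exact Or.inl (hN2.trans_lt (hlt.trans_le hN1))
  · exact mem_Phi_of_le (h hxη) (hN2.trans (heq.symm.le.trans hN1))

end Payoff

section Hypercube

variable {d : ℕ} {z x : Fin d → ℤ}

lemma update_mem_hcube_iff (hx : x ∈ Hcube d z) {i : Fin d} {c : ℤ} :
    update x i c ∈ Hcube d z ↔ c = 2 * z i ∨ c = 2 * z i + 1 := by
  refine ⟨fun h => by simpa using h i, fun hc j => ?_⟩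
  rcases eq_or_ne j i with rfl | hj
  · simpa using hc
  · simpa [update_of_ne hj] using hx j

lemma le_N1_hcube (hx : x ∈ Hcube d z) : d ≤ N1 d (Hcube d z) x := by
  calc d = (range fun i => update x i (if x i = 2 * z i then x i + 1 else x i - 1)).ncard :=
        by rw [ncard_range_update fun i => by split_ifs <;> omega, Nat.card_fin]
    _ ≤ N1 d (Hcube d z) x := by
      refine ncard_le_ncard (range_subset_iff.2 fun i => ⟨neighbor_update i ?_, ?_⟩)
        ((setOf_neighbor_finite x).subset fun _ hy => hy.1)
      · split_ifs <;> omega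
      · rw [update_mem_hcube_iff hx]
        rcases hx i with h | h <;> split_ifs <;> omega

lemma N2_hcube_le (hx : x ∈ Hcube d z) : N2 d (Hcube d z) x ≤ d := by
  calc N2 d (Hcube d z) x
      ≤ (range fun i => update x i (if x i = 2 * z i then x i - 1 else x i + 1)).ncard := by
        refine ncard_le_ncard (fun y ⟨hy, hyz⟩ => ?_) (finite_range _)
        obtain ⟨i, c, hc, rfl⟩ := hy.exists_eq_update
        rw [update_mem_hcube_iff hx] at hyz
        refine ⟨i, congrArg (update x i) ?_⟩
        rcases hx i with h | h <;> split_ifs <;> omega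
    _ = d := by rw [ncard_range_update fun i => by split_ifs <;> omega, Nat.card_fin]

end Hypercube

lemma subset_Phi_of_isUnionOfHypercubes {d : ℕ} {a₁ a₂ : ℝ} (ha : a₂ ≤ a₁) (ha₂ : 0 ≤ a₂)
    {η : Set (Fin d → ℤ)} (hη : IsUnionOfHypercubes d η) : η ⊆ Phi d a₁ a₂ η := by
  obtain ⟨S, hS⟩ := hη
  intro x hx
  obtain ⟨z, hz, hxz⟩ := mem_iUnion₂.1 (hS ▸ hx)
  have hsub : Hcube d z ⊆ η := hS ▸ subset_biUnion_of_mem hz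
  have hN1 : (d : ℝ) ≤ N1 d η x := by exact_mod_cast (le_N1_hcube hxz).trans (N1_mono hsub)
  have hN2 : (N2 d η x : ℝ) ≤ d := by exact_mod_cast (N2_anti hsub).trans (N2_hcube_le hxz)
  refine mem_Phi_of_le hx ?_
  calc a₂ * N2 d η x ≤ a₂ * d := by gcongr
    _ ≤ a₁ * d := by gcongr
    _ ≤ a₁ * N1 d η x := by gcongr; linarith

theorem Phi_iterates_nondecreasing_general (d : ℕ) (a₁ a₂ : ℝ)
    (ha : a₁ > a₂) (ha₂ : 0 < a₂)
    (η : Set (Fin d → ℤ)) (hη : IsUnionOfHypercubes d η) :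
    ∀ n : ℕ, (Phi d a₁ a₂)^[n] η ⊆ (Phi d a₁ a₂)^[n + 1] η := fun n =>
  (Phi_monotone (ha₂.trans ha).le ha₂.le).monotone_iterate_of_le_map
    (subset_Phi_of_isUnionOfHypercubes ha.le ha₂.le hη) n.le_succ

/-- If `a₁ > a₂ > 0` and `η` is a union of hypercubes, then the iterates of the
best-response map form a nondecreasing sequence of configurations. -/
theorem Phi_iterates_nondecreasing (d : ℕ) (hd : 1 ≤ d) (a₁ a₂ : ℝ)
    (ha : a₁ > a₂) (ha₂ : 0 < a₂)
    (η : Set (Fin d → ℤ)) (hη : IsUnionOfHypercubes d η) :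
    ∀ n : ℕ, (Phi d a₁ a₂)^[n] η ⊆ (Phi d a₁ a₂)^[n + 1] η :=
  Phi_iterates_nondecreasing_general d a₁ a₂ ha ha₂ η hη
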